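/- For every a > 0 and every real x ≠ 0, the improper integral ∫_0^∞ sin(x·ξ)/(ξ + a) dξ converges and equals −S_a(x) = −sign(x)·(si(a|x|)·cos(a|x|) − ci(a|x|)·sin(a|x|)). -/

import Mathlib

open Filter MeasureTheory Topology

/-- The sine integral `si(x) = -∫_x^∞ sin t / t dt`, defined via the improper
(limit of interval integrals) form. -/
noncomputable def si (x : ℝ) : ℝ :=
  - limUnder Filter.atTop (fun R : ℝ => ∫ t in x..R, Real.sin t / t)

/-- The cosine integral `ci(x) = -∫_x^∞ cos t / t dt`, defined via the improper
(limit of interval integrals) form. -/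
noncomputable def ci (x : ℝ) : ℝ :=
  - limUnder Filter.atTop (fun R : ℝ => ∫ t in x..R, Real.cos t / t)

/-- The kernel `S_a(x) = sign(x) (si(a|x|) cos(a|x|) - ci(a|x|) sin(a|x|))`, with `S_a(0)=0`. -/
noncomputable def Sker (a x : ℝ) : ℝ :=
  Real.sign x * (si (a * |x|) * Real.cos (a * |x|) - ci (a * |x|) * Real.sin (a * |x|))

/-- The kernel `T_a(x) = si(a|x|) sin(a|x|) + ci(a|x|) cos(a|x|)`. -/
noncomputable def Tker (a x : ℝ) : ℝ :=
  si (a * |x|) * Real.sin (a * |x|) + ci (a * |x|) * Real.cos (a * |x|)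

/-!
Substituting `t = x (ξ + a)` and expanding `sin (t - a x)` turns `∫_0^R sin (x ξ) / (ξ + a) dξ`
into `cos (a x) ∫_{ax}^{x(R+a)} sin t / t dt - sin (a x) ∫_{ax}^{x(R+a)} cos t / t dt`, whose limits
are `-si (a x)` and `-ci (a x)`. That these improper integrals converge follows by integrating by
parts against a bounded antiderivative, which leaves the absolutely convergent `∫ F t / t²`.
The case `x < 0` follows since both sides are odd in `x`.
-/

open Set intervalIntegral Real

theorem integral_div_eq_of_hasDerivAt {f F : ℝ → ℝ} {c R : ℝ} (hc : 0 < c) (hR : 0 < R)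
    (hF : ∀ t ∈ uIcc c R, HasDerivAt F (f t) t) (hf : IntervalIntegrable f volume c R) :
    ∫ t in c..R, f t / t = F R / R - F c / c + ∫ t in c..R, F t / t ^ 2 := by
  have hpos : ∀ t ∈ uIcc c R, 0 < t := fun t ht => (lt_min hc hR).trans_le ht.1
  have hinv : ∀ t ∈ uIcc c R, HasDerivAt (fun t : ℝ => t⁻¹) (-(t ^ 2)⁻¹) t :=
    fun t ht => hasDerivAt_inv (hpos t ht).ne'
  have hinv' : IntervalIntegrable (fun t : ℝ => -(t ^ 2)⁻¹) volume c R :=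
    (ContinuousOn.neg <| continuousOn_inv₀.comp (continuousOn_pow 2)
      fun t ht => pow_ne_zero 2 (hpos t ht).ne').intervalIntegrable
  have hparts := integral_mul_deriv_eq_deriv_mul hinv hF hinv' hf
  simp only [neg_mul, intervalIntegral.integral_neg, ← div_eq_inv_mul] at hparts
  rw [hparts, sub_neg_eq_add]

theorem tendsto_integral_div_of_hasDerivAt {f F : ℝ → ℝ} {C c : ℝ} (hc : 0 < c)
    (hF : ∀ t, HasDerivAt F (f t) t) (hf : Continuous f) (hFC : ∀ t, |F t| ≤ C) :
    Tendsto (fun R => ∫ t in c..R, f t / t) atTop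
      (𝓝 (0 - F c / c + ∫ t in Ioi c, F t / t ^ 2)) := by
  have hFcont : Continuous F := continuous_iff_continuousAt.2 fun t => (hF t).continuousAt
  have hint : IntegrableOn (fun t => F t / t ^ 2) (Ioi c) := by
    refine ((integrableOn_Ioi_rpow_of_lt (by norm_num : (-2 : ℝ) < -1) hc).const_mul C).mono'
      (hFcont.measurable.div (by fun_prop)).aestronglyMeasurable ?_
    filter_upwards [ae_restrict_mem measurableSet_Ioi] with t ht
    have ht0 : 0 < t := hc.trans ht
    rw [norm_div, norm_pow, norm_of_nonneg ht0.le, rpow_neg ht0.le, rpow_two, div_eq_mul_inv]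
    gcongr
    exact hFC t
  have hboundary : Tendsto (fun R => F R / R) atTop (𝓝 0) := by
    refine squeeze_zero_norm' ?_ ((tendsto_const_nhds (x := C)).div_atTop tendsto_id)
    filter_upwards [eventually_gt_atTop 0] with R hR
    rw [norm_div, norm_of_nonneg hR.le]
    exact div_le_div_of_nonneg_right (hFC R) hR.le
  have hlim := ((hboundary.sub_const (F c / c)).add
    (intervalIntegral_tendsto_integral_Ioi c hint tendsto_id))
  refine hlim.congr' ?_
  filter_upwards [eventually_gt_atTop 0] with R hR
  exact (integral_div_eq_of_hasDerivAt hc hR (fun t _ => hF t) (hf.intervalIntegrable c R)).symm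

theorem tendsto_integral_sin_div {c : ℝ} (hc : 0 < c) :
    Tendsto (fun R => ∫ t in c..R, sin t / t) atTop (𝓝 (-si c)) := by
  rw [si, neg_neg]
  have hF : ∀ t, HasDerivAt (fun t => -cos t) (sin t) t := fun t => by
    simpa using (hasDerivAt_cos t).fun_neg
  exact tendsto_nhds_limUnder ⟨_, tendsto_integral_div_of_hasDerivAt hc hF continuous_sin
    fun t => (abs_neg (cos t)).trans_le (abs_cos_le_one t)⟩

theorem tendsto_integral_cos_div {c : ℝ} (hc : 0 < c) :
    Tendsto (fun R => ∫ t in c..R, cos t / t) atTop (𝓝 (-ci c)) := by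
  rw [ci, neg_neg]
  exact tendsto_nhds_limUnder ⟨_, tendsto_integral_div_of_hasDerivAt hc hasDerivAt_sin
    continuous_cos abs_sin_le_one⟩

theorem integral_comp_mul_add_div (g : ℝ → ℝ) {x : ℝ} (hx : x ≠ 0) (a b c : ℝ) :
    ∫ ξ in b..c, g (x * (ξ + a)) / (ξ + a) = ∫ t in x * (b + a)..x * (c + a), g t / t := by
  have h := smul_integral_comp_mul_add (a := b) (b := c) (fun t => g t / t) x (x * a)
  simp only [smul_eq_mul, ← intervalIntegral.integral_const_mul, ← mul_add] at h
  rw [← h]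
  congr 1 with ξ
  rw [mul_div_assoc', mul_div_mul_left _ _ hx]

theorem integral_sin_mul_div_add_eq {a x R : ℝ} (hx : x ≠ 0) (ha : 0 < a) (hR : 0 ≤ R) :
    ∫ ξ in 0..R, sin (x * ξ) / (ξ + a) =
      cos (a * x) * (∫ t in a * x..x * (R + a), sin t / t)
        - sin (a * x) * (∫ t in a * x..x * (R + a), cos t / t) := by
  have hshift : ∀ ξ ∈ uIcc 0 R, ξ + a ≠ 0 := fun ξ hξ => by
    rw [uIcc_of_le hR] at hξ; linarith [hξ.1]
  have hint : ∀ g : ℝ → ℝ, Continuous g →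
      IntervalIntegrable (fun ξ => g (x * (ξ + a)) / (ξ + a)) volume 0 R := fun g hg =>
    ContinuousOn.intervalIntegrable (by fun_prop (disch := exact hshift))
  have hexpand : ∀ ξ, sin (x * ξ) / (ξ + a) =
      cos (a * x) * (sin (x * (ξ + a)) / (ξ + a)) - sin (a * x) * (cos (x * (ξ + a)) / (ξ + a)) := by
    intro ξ
    rw [show x * ξ = x * (ξ + a) - a * x by ring, sin_sub]
    ring
  simp only [hexpand]
  rw [integral_sub ((hint _ continuous_sin).const_mul _) ((hint _ continuous_cos).const_mul _),
    intervalIntegral.integral_const_mul, intervalIntegral.integral_const_mul,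
    integral_comp_mul_add_div _ hx, integral_comp_mul_add_div _ hx, zero_add, mul_comm x a]

theorem tendsto_integral_sin_mul_div_add {a x : ℝ} (ha : 0 < a) (hx : 0 < x) :
    Tendsto (fun R => ∫ ξ in 0..R, sin (x * ξ) / (ξ + a)) atTop
      (𝓝 (ci (a * x) * sin (a * x) - si (a * x) * cos (a * x))) := by
  have hax : 0 < a * x := mul_pos ha hx
  have hupper : Tendsto (fun R => x * (R + a)) atTop atTop :=
    (tendsto_atTop_add_const_right _ a tendsto_id).const_mul_atTop hx
  have hlim := ((tendsto_integral_sin_div hax).comp hupper).const_mul (cos (a * x)) |>.sub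
    (((tendsto_integral_cos_div hax).comp hupper).const_mul (sin (a * x)))
  convert hlim.congr' ?_ using 2
  · ring
  filter_upwards [eventually_ge_atTop 0] with R hR
  exact (integral_sin_mul_div_add_eq hx.ne' ha hR).symm

theorem Sker_neg (a x : ℝ) : Sker a (-x) = -Sker a x := by
  simp only [Sker, Real.sign_neg, abs_neg, neg_mul]

theorem Sker_of_pos (a : ℝ) {x : ℝ} (hx : 0 < x) :
    Sker a x = si (a * x) * cos (a * x) - ci (a * x) * sin (a * x) := by
  rw [Sker, Real.sign_of_pos hx, abs_of_pos hx, one_mul]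

/-- `∫_0^∞ sin(xξ)/(ξ+a) dξ` converges (as an improper integral) to `-S_a(x)`. -/
theorem stmt4 (a : ℝ) (ha : 0 < a) (x : ℝ) (hx : x ≠ 0) :
    Tendsto (fun R : ℝ => ∫ ξ in (0:ℝ)..R, Real.sin (x * ξ) / (ξ + a))
      atTop (nhds (-(Sker a x))) := by
  wlog hpos : 0 < x generalizing x
  · have hneg := this (-x) (neg_ne_zero.2 hx) (neg_pos.2 (lt_of_le_of_ne (not_lt.1 hpos) hx))
    rw [Sker_neg, neg_neg] at hneg
    simpa only [neg_mul, sin_neg, neg_div, intervalIntegral.integral_neg, neg_neg] using hneg.neg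
  rw [Sker_of_pos a hpos, neg_sub]
  exact tendsto_integral_sin_mul_div_add ha hpos
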